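/- For every symmetric 2×2 matrix ξ and η, the Hessian bound D²ψ_λ(ξ)[η,η] ≥ (1/α₀^{N−1})(|ξ|_r^{N−2} ∧ λ^{N−2})|η|_r² holds wherever ψ_λ is twice differentiable (i.e., for |ξ|_r ≠ λ and ξ ≠ 0). -/

import Mathlib

open Matrix MeasureTheory Filter

noncomputable def frobInner (ξ ζ : Matrix (Fin 2) (Fin 2) ℝ) : ℝ :=
  ∑ i : Fin 2, ∑ j : Fin 2, ξ i j * ζ i j

noncomputable def frobNorm (ξ : Matrix (Fin 2) (Fin 2) ℝ) : ℝ :=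
  Real.sqrt (frobInner ξ ξ)

noncomputable def rInner (ξ ζ : Matrix (Fin 2) (Fin 2) ℝ) : ℝ :=
  frobInner ξ ζ - (1 / 3) * Matrix.trace ξ * Matrix.trace ζ

noncomputable def rNorm (ξ : Matrix (Fin 2) (Fin 2) ℝ) : ℝ :=
  Real.sqrt (frobInner ξ ξ - (1 / 3) * Matrix.trace ξ ^ 2)

noncomputable def starNorm (ξ : Matrix (Fin 2) (Fin 2) ℝ) : ℝ :=
  Real.sqrt (frobInner ξ ξ + Matrix.trace ξ ^ 2)

attribute [local instance] Matrix.normedAddCommGroup Matrix.normedSpace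

noncomputable def psi (N : ℕ) (a l : ℝ) (ξ : Matrix (Fin 2) (Fin 2) ℝ) : ℝ :=
  (1 / (N * a ^ (N - 1))) * min (rNorm ξ ^ N) (l ^ N) +
    (1 / (2 * a ^ (N - 1))) * l ^ (N - 2) * max (rNorm ξ ^ 2 - l ^ 2) 0

/-! The function `psi N a l` is `Ψ ∘ Q` with `Q ξ = |ξ|_r²` a quadratic form with polar form `B`
and `Ψ t = c ((t^{N/2} ∧ λ^N) / N + λ^{N-2} (t - λ²)⁺ / 2)`, `c = α₀^{1-N}`. Away from `t = 0` and
`t = λ²` the profile `Ψ` is twice differentiable with `2 Ψ'(|ξ|_r²) = c (|ξ|_r^{N-2} ∧ λ^{N-2})` and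
`Ψ'' ≥ 0`, since `Ψ'` is either constant or `t ↦ c t^{(N-2)/2} / 2`. The chain rule gives
`D²(Ψ ∘ Q)(ξ)[η, η] = 2 Ψ'(Q ξ) Q η + 4 Ψ''(Q ξ) B(ξ, η)²`, and dropping the second term gives
the bound. -/

open Set Topology

section QuadraticForm

variable {E : Type*} [NormedAddCommGroup E] [NormedSpace ℝ E] {B : E →L[ℝ] E →L[ℝ] ℝ}

theorem hasFDerivAt_apply_self (hB : ∀ x y, B x y = B y x) (x : E) :
    HasFDerivAt (fun y => B y y) ((2 : ℝ) • B x) x := by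
  refine (B.hasFDerivAt.clm_apply (hasFDerivAt_id x)).congr_fderiv ?_
  ext v
  simp [hB v x, two_mul]

theorem fderiv_fderiv_comp_apply_self (hB : ∀ x y, B x y = B y x) {G G' : ℝ → ℝ} {G'' : ℝ}
    {x : E} (hG : ∀ᶠ t in 𝓝 (B x x), HasDerivAt G (G' t) t) (hG' : HasDerivAt G' G'' (B x x))
    (η : E) :
    fderiv ℝ (fderiv ℝ fun y => G (B y y)) x η η =
      2 * G' (B x x) * B η η + 4 * G'' * B x η ^ 2 := by
  have hQ : Continuous fun y => B y y := by fun_prop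
  have hD : fderiv ℝ (fun y => G (B y y)) =ᶠ[𝓝 x] fun y => (2 * G' (B y y)) • B y := by
    filter_upwards [hQ.continuousAt.eventually hG] with y hy
    have h := hy.comp_hasFDerivAt (f := fun y => B y y) y (hasFDerivAt_apply_self hB y)
    rw [smul_smul, mul_comm] at h
    exact h.fderiv
  have hc : HasFDerivAt (fun y => 2 * G' (B y y)) ((4 * G'') • B x) x := by
    refine ((hG'.comp_hasFDerivAt (f := fun y => B y y) x
      (hasFDerivAt_apply_self hB x)).const_mul 2).congr_fderiv ?_
    rw [smul_smul, smul_smul]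
    ring_nf
  have hD' : HasFDerivAt (fun y => (2 * G' (B y y)) • B y)
      ((2 * G' (B x x)) • B + ((4 * G'') • B x).smulRight (B x)) x :=
    hc.smul B.hasFDerivAt
  rw [hD.fderiv_eq, hD'.fderiv]
  simp only [_root_.add_apply, _root_.smul_apply, ContinuousLinearMap.smulRight_apply, smul_eq_mul]
  ring

end QuadraticForm

theorem rInner_eq (ξ ζ : Matrix (Fin 2) (Fin 2) ℝ) :
    rInner ξ ζ = ξ 0 0 * ζ 0 0 + ξ 0 1 * ζ 0 1 + ξ 1 0 * ζ 1 0 + ξ 1 1 * ζ 1 1 -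
      (ξ 0 0 + ξ 1 1) * (ζ 0 0 + ζ 1 1) / 3 := by
  simp only [rInner, frobInner, Fin.sum_univ_two, trace_fin_two]
  ring

theorem rInner_comm (ξ ζ : Matrix (Fin 2) (Fin 2) ℝ) : rInner ξ ζ = rInner ζ ξ := by
  rw [rInner_eq, rInner_eq]
  ring

theorem rInner_self_eq (ξ : Matrix (Fin 2) (Fin 2) ℝ) :
    rInner ξ ξ = ((ξ 0 0 - ξ 1 1) ^ 2 + ξ 0 0 ^ 2 + ξ 1 1 ^ 2) / 3 + ξ 0 1 ^ 2 + ξ 1 0 ^ 2 := by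
  rw [rInner_eq]
  ring

theorem rInner_self_nonneg (ξ : Matrix (Fin 2) (Fin 2) ℝ) : 0 ≤ rInner ξ ξ := by
  rw [rInner_self_eq]
  positivity

theorem rInner_self_pos {ξ : Matrix (Fin 2) (Fin 2) ℝ} (hξ : ξ ≠ 0) : 0 < rInner ξ ξ := by
  refine (rInner_self_nonneg ξ).lt_of_ne' fun h => hξ ?_
  rw [rInner_self_eq] at h
  ext i j
  fin_cases i <;> fin_cases j <;> simp only [Fin.zero_eta, Fin.mk_one, Matrix.zero_apply] <;>
    nlinarith [sq_nonneg (ξ 0 0 - ξ 1 1), sq_nonneg (ξ 0 0), sq_nonneg (ξ 1 1),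
      sq_nonneg (ξ 0 1), sq_nonneg (ξ 1 0)]

theorem rNorm_eq_sqrt_rInner (ξ : Matrix (Fin 2) (Fin 2) ℝ) : rNorm ξ = √(rInner ξ ξ) := by
  rw [rNorm, rInner, sq, mul_assoc]

theorem rNorm_sq (ξ : Matrix (Fin 2) (Fin 2) ℝ) : rNorm ξ ^ 2 = rInner ξ ξ := by
  rw [rNorm_eq_sqrt_rInner, Real.sq_sqrt (rInner_self_nonneg ξ)]

noncomputable def rInnerBilin : Matrix (Fin 2) (Fin 2) ℝ →L[ℝ] Matrix (Fin 2) (Fin 2) ℝ →L[ℝ] ℝ :=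
  LinearMap.toContinuousBilinearMap <| LinearMap.mk₂ ℝ rInner
    (fun _ _ _ => by simp only [rInner_eq, Matrix.add_apply]; ring)
    (fun _ _ _ => by simp only [rInner_eq, Matrix.smul_apply, smul_eq_mul]; ring)
    (fun _ _ _ => by simp only [rInner_eq, Matrix.add_apply]; ring)
    (fun _ _ _ => by simp only [rInner_eq, Matrix.smul_apply, smul_eq_mul]; ring)

theorem rInnerBilin_apply (ξ ζ : Matrix (Fin 2) (Fin 2) ℝ) : rInnerBilin ξ ζ = rInner ξ ζ := rfl

theorem rInnerBilin_symm (ξ ζ : Matrix (Fin 2) (Fin 2) ℝ) : rInnerBilin ξ ζ = rInnerBilin ζ ξ :=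
  rInner_comm ξ ζ

theorem hasDerivAt_sqrt_pow {k : ℕ} (hk : 2 ≤ k) {t : ℝ} (ht : 0 < t) :
    HasDerivAt (fun s => √s ^ k) (k / 2 * √t ^ (k - 2)) t := by
  obtain ⟨m, rfl⟩ := Nat.exists_eq_add_of_le' hk
  refine ((Real.hasDerivAt_sqrt ht.ne').pow (m + 2)).congr_deriv ?_
  have hs : 0 < √t := Real.sqrt_pos.mpr ht
  rw [show m + 2 - 1 = m + 1 by omega, Nat.add_sub_cancel]
  field_simp
  ring

noncomputable def psiProfile (N : ℕ) (a l t : ℝ) : ℝ :=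
  (1 / (N * a ^ (N - 1))) * min (√t ^ N) (l ^ N) +
    (1 / (2 * a ^ (N - 1))) * l ^ (N - 2) * max (t - l ^ 2) 0

noncomputable def psiProfileDeriv (N : ℕ) (a l t : ℝ) : ℝ :=
  (1 / (2 * a ^ (N - 1))) * min (√t ^ (N - 2)) (l ^ (N - 2))

section Profile

variable {N : ℕ} {a l t : ℝ}

theorem psiProfile_eqOn_Ioo (hl : 0 < l) :
    EqOn (psiProfile N a l) (fun t => 1 / (N * a ^ (N - 1)) * √t ^ N) (Ioo 0 (l ^ 2)) := by
  intro t ht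
  have hmin := pow_le_pow_left₀ (Real.sqrt_nonneg t) ((Real.sqrt_lt' hl).mpr ht.2).le N
  simp only [psiProfile, min_eq_left hmin, max_eq_right (sub_nonpos.mpr ht.2.le), mul_zero,
    add_zero]

theorem psiProfile_eqOn_Ioi (hl : 0 < l) :
    EqOn (psiProfile N a l)
      (fun t => 1 / (N * a ^ (N - 1)) * l ^ N + 1 / (2 * a ^ (N - 1)) * l ^ (N - 2) * (t - l ^ 2))
      (Ioi (l ^ 2)) := by
  intro t ht
  have hmin := pow_le_pow_left₀ hl.le ((Real.lt_sqrt hl.le).mpr ht).le N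
  simp only [psiProfile, min_eq_right hmin, max_eq_left (sub_nonneg.mpr (mem_Ioi.mp ht).le)]

theorem psiProfileDeriv_eqOn_Ioo (hl : 0 < l) :
    EqOn (psiProfileDeriv N a l) (fun t => 1 / (2 * a ^ (N - 1)) * √t ^ (N - 2))
      (Ioo 0 (l ^ 2)) := by
  intro t ht
  simp only [psiProfileDeriv,
    min_eq_left (pow_le_pow_left₀ (Real.sqrt_nonneg t) ((Real.sqrt_lt' hl).mpr ht.2).le _)]

theorem psiProfileDeriv_eqOn_Ioi (hl : 0 < l) :
    EqOn (psiProfileDeriv N a l) (fun _ => 1 / (2 * a ^ (N - 1)) * l ^ (N - 2)) (Ioi (l ^ 2)) := by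
  intro t ht
  simp only [psiProfileDeriv,
    min_eq_right (pow_le_pow_left₀ hl.le ((Real.lt_sqrt hl.le).mpr ht).le _)]

theorem hasDerivAt_psiProfile (hN : 2 ≤ N) (hl : 0 < l) (ht : 0 < t) (htl : t ≠ l ^ 2) :
    HasDerivAt (psiProfile N a l) (psiProfileDeriv N a l t) t := by
  rcases htl.lt_or_gt with htl | htl
  · have hmem : t ∈ Ioo 0 (l ^ 2) := ⟨ht, htl⟩
    rw [psiProfileDeriv_eqOn_Ioo hl hmem]
    refine (((hasDerivAt_sqrt_pow hN ht).const_mul (1 / (N * a ^ (N - 1)))).congr_deriv ?_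
      ).congr_of_eventuallyEq ((psiProfile_eqOn_Ioo hl).eventuallyEq_of_mem
        (isOpen_Ioo.mem_nhds hmem))
    have : (N : ℝ) ≠ 0 := by positivity
    field_simp
  · rw [psiProfileDeriv_eqOn_Ioi hl htl]
    refine ((((hasDerivAt_id t).sub_const (l ^ 2)).const_mul _).const_add _ |>.congr_deriv
      (mul_one _)).congr_of_eventuallyEq ((psiProfile_eqOn_Ioi hl).eventuallyEq_of_mem
        (isOpen_Ioi.mem_nhds htl))

theorem exists_hasDerivAt_psiProfileDeriv (hN : 4 ≤ N) (ha : 0 < a) (hl : 0 < l) (ht : 0 < t)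
    (htl : t ≠ l ^ 2) : ∃ d, 0 ≤ d ∧ HasDerivAt (psiProfileDeriv N a l) d t := by
  rcases htl.lt_or_gt with htl | htl
  · have hmem : t ∈ Ioo 0 (l ^ 2) := ⟨ht, htl⟩
    refine ⟨_, by positivity, ((hasDerivAt_sqrt_pow (by omega : 2 ≤ N - 2) ht).const_mul
      (1 / (2 * a ^ (N - 1)))).congr_of_eventuallyEq
        ((psiProfileDeriv_eqOn_Ioo hl).eventuallyEq_of_mem (isOpen_Ioo.mem_nhds hmem))⟩
  · exact ⟨0, le_rfl, (hasDerivAt_const t _).congr_of_eventuallyEq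
      ((psiProfileDeriv_eqOn_Ioi hl).eventuallyEq_of_mem (isOpen_Ioi.mem_nhds htl))⟩

end Profile

theorem psi_eq_psiProfile_comp (N : ℕ) (a l : ℝ) :
    psi N a l = fun ξ => psiProfile N a l (rInnerBilin ξ ξ) := by
  ext ξ
  rw [psi, rNorm_sq, rNorm_eq_sqrt_rInner, psiProfile, rInnerBilin_apply]

theorem exists_fderiv_fderiv_psi_apply_eq {N : ℕ} (hN : 4 ≤ N) {a l : ℝ} (ha : 0 < a)
    (hl : 0 < l) {ξ : Matrix (Fin 2) (Fin 2) ℝ} (hξ : 0 < rInner ξ ξ) (hξl : rInner ξ ξ ≠ l ^ 2)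
    (η : Matrix (Fin 2) (Fin 2) ℝ) :
    ∃ d, 0 ≤ d ∧ fderiv ℝ (fderiv ℝ (psi N a l)) ξ η η =
      2 * psiProfileDeriv N a l (rInner ξ ξ) * rInner η η + 4 * d * rInner ξ η ^ 2 := by
  have hprofile : ∀ᶠ t in 𝓝 (rInner ξ ξ),
      HasDerivAt (psiProfile N a l) (psiProfileDeriv N a l t) t :=
    ((isOpen_lt' 0).inter isOpen_ne).eventually_mem ⟨hξ, hξl⟩ |>.mono
      fun t ht => hasDerivAt_psiProfile (by omega) hl ht.1 ht.2
  obtain ⟨d, hd, hderiv⟩ := exists_hasDerivAt_psiProfileDeriv hN ha hl hξ hξl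
  refine ⟨d, hd, ?_⟩
  rw [psi_eq_psiProfile_comp]
  exact fderiv_fderiv_comp_apply_self rInnerBilin_symm hprofile hderiv η

theorem stmt17_general (N : ℕ) (hN : 4 ≤ N) (a l : ℝ) (ha : 0 < a) (hl : 0 < l)
    (ξ η : Matrix (Fin 2) (Fin 2) ℝ)
    (h1 : rNorm ξ ≠ l) (h2 : ξ ≠ 0) :
    (1 / a ^ (N - 1)) * min (rNorm ξ ^ (N - 2)) (l ^ (N - 2)) * rNorm η ^ 2 ≤
      fderiv ℝ (fderiv ℝ (psi N a l)) ξ η η := by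
  have hξl : rInner ξ ξ ≠ l ^ 2 := fun h =>
    h1 (by rw [rNorm_eq_sqrt_rInner, h, Real.sqrt_sq hl.le])
  obtain ⟨d, hd, hsecond⟩ :=
    exists_fderiv_fderiv_psi_apply_eq hN ha hl (rInner_self_pos h2) hξl η
  calc 1 / a ^ (N - 1) * min (rNorm ξ ^ (N - 2)) (l ^ (N - 2)) * rNorm η ^ 2
      = 2 * psiProfileDeriv N a l (rInner ξ ξ) * rInner η η := by
        rw [psiProfileDeriv, rNorm_eq_sqrt_rInner, rNorm_sq]
        ring
    _ ≤ fderiv ℝ (fderiv ℝ (psi N a l)) ξ η η := by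
        rw [hsecond]
        exact le_add_of_nonneg_right (by positivity)

theorem stmt17 (N : ℕ) (hN : 4 ≤ N) (a l : ℝ) (ha : 0 < a) (hl : 0 < l)
    (ξ η : Matrix (Fin 2) (Fin 2) ℝ) (hξ : ξ.IsSymm) (hη : η.IsSymm)
    (h1 : rNorm ξ ≠ l) (h2 : ξ ≠ 0) :
    (1 / a ^ (N - 1)) * min (rNorm ξ ^ (N - 2)) (l ^ (N - 2)) * rNorm η ^ 2 ≤
      fderiv ℝ (fderiv ℝ (psi N a l)) ξ η η :=
  stmt17_general N hN a l ha hl ξ η h1 h2
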